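/- Let A be a finite-dimensional C*-algebra (matrix algebra), H = H† ∈ A with ground eigenvalue E_0, v a ground eigenvector, O = O† ∈ A with ⟨v, O v⟩ ≥ c > 0 and ⟨v, (1+O)^2 v⟩ =: 1/N finite. Then the state ω(X) := N ⟨v, (1+O) X (1+O) v⟩ satisfies ω(H) − E_0 = (N/2) ⟨v, [O,[H,O]] v⟩, and if moreover ‖[O,[H,O]]‖ ≤ c_1, then ω(H) − E_0 ≤ N c_1 / 2. -/

import Mathlib

open scoped InnerProductSpace

/-- for a Hermitian `H` with ground eigenvector `v`, a self-adjoint `O` with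
`⟨v, O v⟩ ≥ c > 0` and `⟨v,(1+O)² v⟩ = 1/N`, the trial state
`ω(X) := N ⟨v,(1+O) X (1+O) v⟩` satisfies `ω(H) − E₀ = (N/2)⟨v,[O,[H,O]] v⟩`, and if
`‖[O,[H,O]]‖ ≤ c₁` then `ω(H) − E₀ ≤ N c₁/2`. -/
theorem trial_state_energy_bound
    {E : Type*} [NormedAddCommGroup E] [InnerProductSpace ℂ E] [FiniteDimensional ℂ E]
    (H O : E →L[ℂ] E)
    (hH : IsSelfAdjoint H) (hO : IsSelfAdjoint O)
    (E0 : ℝ) (v : E) (hv : ‖v‖ = 1) (heig : H v = (E0 : ℂ) • v)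
    (c : ℝ) (hc : 0 < c) (hOv : c ≤ (⟪v, O v⟫_ℂ).re)
    (N : ℝ) (hN : 0 < N)
    (hNdef : ⟪v, ((1 + O) * (1 + O)) v⟫_ℂ = ((1 / N : ℝ) : ℂ))
    (ω : (E →L[ℂ] E) → ℂ)
    (hω : ∀ X, ω X = (N : ℂ) * ⟪v, ((1 + O) * X * (1 + O)) v⟫_ℂ) :
    ω H - (E0 : ℂ)
      = ((N / 2 : ℝ) : ℂ) * ⟪v, (O * (H * O - O * H) - (H * O - O * H) * O) v⟫_ℂ ∧
    (∀ c1 : ℝ, ‖O * (H * O - O * H) - (H * O - O * H) * O‖ ≤ c1 →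
      (ω H).re - E0 ≤ N * c1 / 2) := by
  set D := O * (H * O - O * H) - (H * O - O * H) * O with hD
  set P := (1 + O : E →L[ℂ] E) with hP
  have hHadj : ContinuousLinearMap.adjoint H = H := hH
  have hinnerH : ∀ w : E, ⟪v, H w⟫_ℂ = (E0 : ℂ) * ⟪v, w⟫_ℂ := by
    intro w
    rw [← hHadj, ContinuousLinearMap.adjoint_inner_right, heig, inner_smul_left]
    simp
  have key : P * H * P + P * H * P = (P * P) * H + H * (P * P) + D := by
    simp only [hP, hD]
    noncomm_ring
  have h1 : ⟪v, ((P * P) * H) v⟫_ℂ = (E0 : ℂ) * ((1 / N : ℝ) : ℂ) := by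
    have : ((P * P) * H) v = (E0 : ℂ) • (P * P) v := by
      simp [ContinuousLinearMap.mul_apply, heig, map_smul]
    rw [this, inner_smul_right, hNdef]
  have h2 : ⟪v, (H * (P * P)) v⟫_ℂ = (E0 : ℂ) * ((1 / N : ℝ) : ℂ) := by
    rw [ContinuousLinearMap.mul_apply, hinnerH, hNdef]
  have h3 := congrArg (fun X : E →L[ℂ] E => ⟪v, X v⟫_ℂ) key
  simp only [ContinuousLinearMap.add_apply, inner_add_right, h1, h2] at h3
  have hNne : (N : ℂ) ≠ 0 := by exact_mod_cast hN.ne'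
  have goal1 : ω H - (E0 : ℂ) = ((N / 2 : ℝ) : ℂ) * ⟪v, D v⟫_ℂ := by
    rw [hω H]
    push_cast
    have hPH : ⟪v, (P * H * P) v⟫_ℂ
        = (E0 : ℂ) * ((N : ℂ))⁻¹ + (2 : ℂ)⁻¹ * ⟪v, D v⟫_ℂ := by
      field_simp at h3 ⊢
      push_cast at h3 ⊢
      linear_combination (↑N : ℂ) * h3 + (2 * (E0 : ℂ)) * mul_inv_cancel₀ hNne
    rw [show ((⇑P ∘ ⇑H) ∘ ⇑P) v = (P * H * P) v from rfl, hPH]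
    field_simp
    ring
  refine ⟨goal1, ?_⟩
  intro c1 hc1
  have hre : (ω H).re - E0 = (N / 2) * (⟪v, D v⟫_ℂ).re := by
    have := congrArg Complex.re goal1
    simp [Complex.sub_re, Complex.mul_re] at this
    simpa using this
  rw [hre]
  have hb : (⟪v, D v⟫_ℂ).re ≤ c1 := by
    calc (⟪v, D v⟫_ℂ).re ≤ ‖⟪v, D v⟫_ℂ‖ := Complex.re_le_norm _
      _ ≤ ‖v‖ * ‖D v‖ := norm_inner_le_norm _ _
      _ ≤ ‖v‖ * (‖D‖ * ‖v‖) := by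
          gcongr; exact D.le_opNorm v
      _ = ‖D‖ := by rw [hv]; ring
      _ ≤ c1 := hc1
  have : (N / 2) * (⟪v, D v⟫_ℂ).re ≤ (N / 2) * c1 := by
    apply mul_le_mul_of_nonneg_left hb (by linarith)
  linarith
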